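/- arXiv:2409.11716 — 9 statements merged into one kernel-verified Lean document; each statement's English description precedes it below -/
import Mathlib

section
/- Let n ≥ k ≥ 2 be integers and x_1,…,x_k positive integers with x_1+⋯+x_k = n. Then x_1x_2 + x_2x_3 + ⋯ + x_{k-1}x_k ≥ n - 1. -/
lemma path_aux (k : ℕ) (hk : 2 ≤ k) (x : ℕ → ℕ)
    (hpos : ∀ i ∈ Finset.Icc 1 k, 0 < x i) :
    ∑ i ∈ Finset.Icc 1 k, x i ≤ (∑ i ∈ Finset.Icc 1 (k - 1), x i * x (i + 1)) + 1 := by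
  induction k with
  | zero => omega
  | succ k ih =>
    rcases Nat.lt_or_ge k 2 with hk2 | hk2
    · -- k+1 = 2
      interval_cases k
      · omega
      · -- k = 1, so k+1 = 2
        have h1 : 0 < x 1 := hpos 1 (by decide)
        have h2 : 0 < x 2 := hpos 2 (by decide)
        simp only [Finset.sum_Icc_succ_top (by norm_num : (1:ℕ) ≤ 2)]
        simp only [show (2:ℕ) - 1 = 1 by rfl, Finset.Icc_self, Finset.sum_singleton]
        nlinarith
    · have hpos' : ∀ i ∈ Finset.Icc 1 k, 0 < x i := by
        intro i hi
        exact hpos i (Finset.mem_Icc.mpr ⟨(Finset.mem_Icc.mp hi).1, le_trans (Finset.mem_Icc.mp hi).2 (Nat.le_succ k)⟩)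
      have key := ih hk2 hpos'
      have hsplit : ∑ i ∈ Finset.Icc 1 (k + 1), x i
          = (∑ i ∈ Finset.Icc 1 k, x i) + x (k + 1) :=
        Finset.sum_Icc_succ_top (by omega) x
      have hsplit2 : ∑ i ∈ Finset.Icc 1 (k + 1 - 1), x i * x (i + 1)
          = (∑ i ∈ Finset.Icc 1 (k - 1), x i * x (i + 1)) + x k * x (k + 1) := by
        have : k + 1 - 1 = (k - 1) + 1 := by omega
        rw [this]
        have := Finset.sum_Icc_succ_top (a := 1) (b := k - 1) (by omega)
          (fun i => x i * x (i + 1))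
        rw [this, show k - 1 + 1 = k by omega]
      have hxk : 0 < x k := hpos k (Finset.mem_Icc.mpr ⟨by omega, by omega⟩)
      have hxk1 : 0 < x (k + 1) := hpos (k + 1) (Finset.mem_Icc.mpr ⟨by omega, le_refl _⟩)
      rw [hsplit, hsplit2]
      nlinarith

/-- If `n ≥ k ≥ 2` and `x 1, …, x k` are positive integers summing to `n`,
then `x 1 * x 2 + ⋯ + x (k-1) * x k ≥ n - 1`. -/
theorem path_form_lower_bound (n k : ℕ) (hk : 2 ≤ k) (hn : k ≤ n) (x : ℕ → ℕ)
    (hpos : ∀ i ∈ Finset.Icc 1 k, 0 < x i)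
    (hsum : ∑ i ∈ Finset.Icc 1 k, x i = n) :
    n - 1 ≤ ∑ i ∈ Finset.Icc 1 (k - 1), x i * x (i + 1) := by
  have := path_aux k hk x hpos
  omega
end

section
/- Let n ≥ k ≥ 4 be integers and x_1,…,x_k positive integers with x_1+⋯+x_k = n. Then x_1x_2 + x_2x_3 + ⋯ + x_{k-1}x_k ≤ ⌊(n-k+4)/2⌋·⌈(n-k+4)/2⌉ + k - 5. -/
open Finset

/-! Write `x i = y i + 1`, so that `m := ∑ y i = n - k`. Expanding,
`∑ x i * x (i+1) = ∑ y i * y (i+1) + ∑_{i<k} y i + ∑_{i>1} y i + (k - 1)`, and the two linear sums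
are at most `m` each. Every consecutive pair has one odd and one even index, so the quadratic sum
is at most `A * B` with `A`, `B` the sums over odd and even indices; as `A + B = m`, this is at most
`⌊m/2⌋ * ⌈m/2⌉`. Finally `⌊(m+4)/2⌋ * ⌈(m+4)/2⌉ = ⌊m/2⌋ * ⌈m/2⌉ + 2 * m + 4`. -/

theorem Nat.mul_le_div_two_mul_succ_div_two (a b : ℕ) :
    a * b ≤ (a + b) / 2 * ((a + b + 1) / 2) := by
  obtain ⟨p, hp | hp⟩ := Nat.even_or_odd' (a + b)
  · rw [hp, show (2 * p + 1) / 2 = p by omega, Nat.mul_div_cancel_left p two_pos]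
    nlinarith [sq_nonneg ((a : ℤ) - b)]
  · rw [hp, show (2 * p + 1) / 2 = p by omega, show (2 * p + 1 + 1) / 2 = p + 1 by omega]
    nlinarith [sq_nonneg ((a : ℤ) - b)]

theorem Nat.add_four_div_two_mul_succ_div_two (m : ℕ) :
    (m + 4) / 2 * ((m + 4 + 1) / 2) = m / 2 * ((m + 1) / 2) + 2 * m + 4 := by
  rw [show (m + 4) / 2 = m / 2 + 2 by omega, show (m + 4 + 1) / 2 = (m + 1) / 2 + 2 by omega]
  have h_halves : m / 2 + (m + 1) / 2 = m := by omega
  linear_combination 2 * h_halves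

theorem sum_mul_succ_le_sum_odd_mul_sum_even (k : ℕ) (y : ℕ → ℕ) :
    ∑ i ∈ Icc 1 (k - 1), y i * y (i + 1) ≤
      (∑ i ∈ Icc 1 k with Odd i, y i) * ∑ i ∈ Icc 1 k with ¬Odd i, y i := by
  set odds := {i ∈ Icc 1 k | Odd i}
  set evens := {i ∈ Icc 1 k | ¬Odd i}
  set edge : ℕ → ℕ × ℕ := fun i => if Odd i then (i, i + 1) else (i + 1, i)
  have h_inj : Set.InjOn edge (Icc 1 (k - 1)) := by
    intro a _ b _ hab
    simp only [edge] at hab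
    split_ifs at hab <;> simp only [Prod.mk.injEq] at hab <;> omega
  have h_sub : (Icc 1 (k - 1)).image edge ⊆ odds ×ˢ evens := by
    simp only [subset_iff, mem_image, mem_Icc, mem_product, odds, evens, mem_filter]
    rintro _ ⟨i, hi, rfl⟩
    by_cases h : Odd i <;> simp [edge, h, Nat.odd_add_one] <;> omega
  calc ∑ i ∈ Icc 1 (k - 1), y i * y (i + 1)
      = ∑ i ∈ Icc 1 (k - 1), y (edge i).1 * y (edge i).2 := by
        refine sum_congr rfl fun i _ => ?_
        by_cases h : Odd i <;> simp [edge, h, Nat.mul_comm]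
    _ = ∑ p ∈ (Icc 1 (k - 1)).image edge, y p.1 * y p.2 :=
        (sum_image (f := fun p => y p.1 * y p.2) h_inj).symm
    _ ≤ ∑ p ∈ odds ×ˢ evens, y p.1 * y p.2 :=
        sum_le_sum_of_subset h_sub
    _ = _ := by rw [sum_product, sum_mul_sum]

theorem sum_Icc_comp_succ_le (k : ℕ) (y : ℕ → ℕ) :
    ∑ i ∈ Icc 1 (k - 1), y (i + 1) ≤ ∑ i ∈ Icc 1 k, y i := by
  obtain _ | k := k
  · simp
  calc ∑ i ∈ Icc 1 (k + 1 - 1), y (i + 1)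
      = ∑ i ∈ Icc (1 + 1) (k + 1), y i := by
        rw [← map_add_right_Icc, sum_map, Nat.add_sub_cancel]; rfl
    _ ≤ ∑ i ∈ Icc 1 (k + 1), y i := sum_le_sum_of_subset (Icc_subset_Icc (by norm_num) le_rfl)

theorem sum_succ_mul_succ_le (k : ℕ) (y : ℕ → ℕ) :
    ∑ i ∈ Icc 1 (k - 1), (y i + 1) * (y (i + 1) + 1) ≤
      (∑ i ∈ Icc 1 k, y i) / 2 * ((∑ i ∈ Icc 1 k, y i + 1) / 2) + 2 * ∑ i ∈ Icc 1 k, y i +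
        (k - 1) := by
  have h_expand : ∑ i ∈ Icc 1 (k - 1), (y i + 1) * (y (i + 1) + 1) =
      ∑ i ∈ Icc 1 (k - 1), y i * y (i + 1) + ∑ i ∈ Icc 1 (k - 1), y i +
        ∑ i ∈ Icc 1 (k - 1), y (i + 1) + (k - 1) := by
    simp only [add_mul, mul_add, mul_one, one_mul, sum_add_distrib, sum_const, Nat.card_Icc,
      smul_eq_mul]
    omega
  have h_quad : ∑ i ∈ Icc 1 (k - 1), y i * y (i + 1) ≤
      (∑ i ∈ Icc 1 k, y i) / 2 * ((∑ i ∈ Icc 1 k, y i + 1) / 2) := by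
    rw [← sum_filter_add_sum_filter_not (Icc 1 k) Odd y]
    exact (sum_mul_succ_le_sum_odd_mul_sum_even k y).trans (Nat.mul_le_div_two_mul_succ_div_two _ _)
  have h_left : ∑ i ∈ Icc 1 (k - 1), y i ≤ ∑ i ∈ Icc 1 k, y i :=
    sum_le_sum_of_subset (Icc_subset_Icc le_rfl (Nat.sub_le k 1))
  have h_right := sum_Icc_comp_succ_le k y
  omega

theorem path_form_upper_bound_general (n k : ℕ) (hk : 4 ≤ k) (x : ℕ → ℕ)
    (hpos : ∀ i ∈ Finset.Icc 1 k, 0 < x i)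
    (hsum : ∑ i ∈ Finset.Icc 1 k, x i = n) :
    ∑ i ∈ Finset.Icc 1 (k - 1), x i * x (i + 1) ≤
      ((n - k + 4) / 2) * ((n - k + 4 + 1) / 2) + k - 5 := by
  have hx : ∀ i ∈ Icc 1 k, x i = x i - 1 + 1 := fun i hi => (Nat.sub_add_cancel (hpos i hi)).symm
  have h_excess : ∑ i ∈ Icc 1 k, (x i - 1) = n - k := by
    have : ∑ i ∈ Icc 1 k, (x i - 1) + k = n := by
      rw [← hsum, sum_congr rfl hx, sum_add_distrib, sum_const, Nat.card_Icc, smul_eq_mul, mul_one,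
        Nat.add_sub_cancel]
    omega
  calc ∑ i ∈ Icc 1 (k - 1), x i * x (i + 1)
      = ∑ i ∈ Icc 1 (k - 1), (x i - 1 + 1) * (x (i + 1) - 1 + 1) := by
        refine sum_congr rfl fun i hi => ?_
        rw [mem_Icc] at hi
        rw [← hx i (mem_Icc.2 ⟨hi.1, by omega⟩), ← hx (i + 1) (mem_Icc.2 ⟨by omega, by omega⟩)]
    _ ≤ (n - k) / 2 * ((n - k + 1) / 2) + 2 * (n - k) + (k - 1) := by
        simpa only [h_excess] using sum_succ_mul_succ_le k (fun i => x i - 1)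
    _ = (n - k + 4) / 2 * ((n - k + 4 + 1) / 2) + k - 5 := by
        rw [Nat.add_four_div_two_mul_succ_div_two]
        omega

/-- If `n ≥ k ≥ 4` and `x 1, …, x k` are positive integers summing to `n`, then
`x 1 * x 2 + ⋯ + x (k-1) * x k ≤ ⌊(n-k+4)/2⌋ * ⌈(n-k+4)/2⌉ + k - 5`. -/
theorem path_form_upper_bound (n k : ℕ) (hk : 4 ≤ k) (hn : k ≤ n) (x : ℕ → ℕ)
    (hpos : ∀ i ∈ Finset.Icc 1 k, 0 < x i)
    (hsum : ∑ i ∈ Finset.Icc 1 k, x i = n) :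
    ∑ i ∈ Finset.Icc 1 (k - 1), x i * x (i + 1) ≤
      ((n - k + 4) / 2) * ((n - k + 4 + 1) / 2) + k - 5 :=
  path_form_upper_bound_general n k hk x hpos hsum
end

section
/- For all integers n ≥ k ≥ 4, the upper bound ⌊(n-k+4)/2⌋·⌈(n-k+4)/2⌉ + k - 5 for the path quadratic form x_1x_2 + ⋯ + x_{k-1}x_k over positive integers with sum n is attained, namely by x_1 = ⋯ = x_{k-3} = x_k = 1, x_{k-2} = ⌊(n-k+2)/2⌋, x_{k-1} = ⌈(n-k+2)/2⌉. -/
lemma icc_split (m : ℕ) : Finset.Icc 1 (m + 1) = Finset.Icc 1 m ∪ {m + 1} := by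
  ext i; simp [Finset.mem_Icc]; omega

/-- For `n ≥ k ≥ 4`, the upper bound `⌊(n-k+4)/2⌋ * ⌈(n-k+4)/2⌉ + k - 5` for the
path quadratic form is attained by `x i = 1` for `i ∈ {1,…,k-3} ∪ {k}`,
`x (k-2) = ⌊(n-k+2)/2⌋` and `x (k-1) = ⌈(n-k+2)/2⌉`. -/
theorem path_form_upper_bound_attained (n k : ℕ) (hk : 4 ≤ k) (hn : k ≤ n) :
    let x : ℕ → ℕ := fun i =>
      if i = k - 2 then (n - k + 2) / 2 else if i = k - 1 then (n - k + 2 + 1) / 2 else 1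
    (∀ i ∈ Finset.Icc 1 k, 0 < x i) ∧
      (∑ i ∈ Finset.Icc 1 k, x i = n) ∧
      ∑ i ∈ Finset.Icc 1 (k - 1), x i * x (i + 1) =
        ((n - k + 4) / 2) * ((n - k + 4 + 1) / 2) + k - 5 := by
  obtain ⟨K, rfl⟩ : ∃ K, k = K + 4 := ⟨k - 4, by omega⟩
  obtain ⟨M, rfl⟩ : ∃ M, n = K + 4 + M := ⟨n - (K + 4), by omega⟩
  have hsub : K + 4 + M - (K + 4) = M := by omega
  intro x
  have hx : ∀ i, x i = if i = K + 2 then (M + 2) / 2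
      else if i = K + 3 then (M + 3) / 2 else 1 := by
    intro i
    simp only [x, hsub]
    rfl
  have hones : ∀ i ≤ K + 1, x i = 1 := by
    intro i hi
    rw [hx]
    have h1 : i ≠ K + 2 := by omega
    have h2 : i ≠ K + 3 := by omega
    simp [h1, h2]
  have hsum1 : ∀ m ≤ K + 1, ∑ i ∈ Finset.Icc 1 m, x i = m := by
    intro m hm
    rw [Finset.sum_congr rfl (fun i hi => hones i (by
      simp only [Finset.mem_Icc] at hi; omega))]
    simp [Nat.Icc_eq_range']
  have ha : x (K + 2) = (M + 2) / 2 := by rw [hx]; simp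
  have hb : x (K + 3) = (M + 3) / 2 := by rw [hx]; simp [Nat.succ_ne_self]
  have hc : x (K + 4) = 1 := by rw [hx]; simp
  refine ⟨?_, ?_, ?_⟩
  · intro i _
    rw [hx]
    split <;> [omega; split <;> omega]
  · have e1 : (K : ℕ) + 4 - 2 = K + 2 := rfl
    rw [icc_split (K + 3),
      Finset.sum_union (by simp),
      icc_split (K + 2),
      Finset.sum_union (by simp),
      icc_split (K + 1),
      Finset.sum_union (by simp)]
    simp only [Finset.sum_singleton, hsum1 (K + 1) le_rfl, ha, hb, hc]
    omega
  · have e1 : (K : ℕ) + 4 - 1 = K + 3 := rfl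
    rw [e1,
      icc_split (K + 2),
      Finset.sum_union (by simp),
      icc_split (K + 1),
      Finset.sum_union (by simp),
      icc_split K,
      Finset.sum_union (by simp)]
    have hrest : ∑ i ∈ Finset.Icc 1 K, x i * x (i + 1) = K := by
      rw [Finset.sum_congr rfl (fun i hi => by
        simp only [Finset.mem_Icc] at hi
        rw [hones i (by omega), hones (i + 1) (by omega)])]
      simp [Nat.Icc_eq_range']
    simp only [Finset.sum_singleton, hrest, hones (K + 1) le_rfl, ha, hb, hc, hsub]
    have key : ((M + 4) / 2) * ((M + 4 + 1) / 2)
        = (M + 2) / 2 * ((M + 3) / 2) + ((M + 2) / 2 + (M + 3) / 2) + 1 := by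
      have h1 : (M + 4) / 2 = (M + 2) / 2 + 1 := by omega
      have h2 : (M + 4 + 1) / 2 = (M + 3) / 2 + 1 := by omega
      rw [h1, h2]; ring
    have hab : (M + 2) / 2 + (M + 3) / 2 = M + 2 := by omega
    generalize (M + 2) / 2 * ((M + 3) / 2) = c at key ⊢
    omega
end

section
/- Let n ≥ k ≥ 2 be integers and x_1,…,x_k positive integers with x_1+⋯+x_k = n. Then the cyclic quadratic form x_1x_2 + x_2x_3 + ⋯ + x_{k-1}x_k + x_kx_1 is at least 2n - k. -/
/-- If `n ≥ k ≥ 2` and `x 1, …, x k` are positive integers summing to `n`, then the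
cyclic quadratic form `x 1 * x 2 + ⋯ + x (k-1) * x k + x k * x 1` is at least `2n - k`. -/
theorem cyclic_form_lower_bound (n k : ℕ) (hk : 2 ≤ k) (hn : k ≤ n) (x : ℕ → ℕ)
    (hpos : ∀ i ∈ Finset.Icc 1 k, 0 < x i)
    (hsum : ∑ i ∈ Finset.Icc 1 k, x i = n) :
    2 * n - k ≤ (∑ i ∈ Finset.Icc 1 (k - 1), x i * x (i + 1)) + x k * x 1 := by
  have key : ∀ a b : ℕ, 1 ≤ a → 1 ≤ b → a + b ≤ a * b + 1 := by
    intro a b ha hb; nlinarith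
  have h1 : ∑ i ∈ Finset.Icc 1 (k-1), (x i + x (i+1)) ≤
      ∑ i ∈ Finset.Icc 1 (k-1), (x i * x (i+1) + 1) := by
    apply Finset.sum_le_sum
    intro i hi
    simp only [Finset.mem_Icc] at hi
    exact key _ _ (hpos i (by simp only [Finset.mem_Icc]; omega))
      (hpos (i+1) (by simp only [Finset.mem_Icc]; omega))
  have hsplit : ∑ i ∈ Finset.Icc 1 (k-1), (x i + x (i+1)) =
      (∑ i ∈ Finset.Icc 1 (k-1), x i) + ∑ i ∈ Finset.Icc 1 (k-1), x (i+1) :=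
    Finset.sum_add_distrib
  have htop : ∑ i ∈ Finset.Icc 1 k, x i = (∑ i ∈ Finset.Icc 1 (k-1), x i) + x k := by
    have : k = (k-1) + 1 := by omega
    rw [this, Finset.sum_Icc_succ_top (by omega)]
    simp
  have hshift : ∑ i ∈ Finset.Icc 1 (k-1), x (i+1) = ∑ i ∈ Finset.Icc 2 k, x i := by
    rw [show (2:ℕ) = 1 + 1 by rfl, show k = 1 + (k-1) by omega,
      ← Finset.map_add_left_Icc, Finset.sum_map]
    simp [addLeftEmbedding, add_comm]
  have hbot : ∑ i ∈ Finset.Icc 1 k, x i = x 1 + ∑ i ∈ Finset.Icc 2 k, x i := by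
    have hins : Finset.Icc 1 k = insert 1 (Finset.Icc 2 k) := by
      ext i; simp only [Finset.mem_insert, Finset.mem_Icc]; omega
    rw [hins, Finset.sum_insert (by simp)]
  have hone : ∑ i ∈ Finset.Icc 1 (k-1), (x i * x (i+1) + 1) =
      (∑ i ∈ Finset.Icc 1 (k-1), x i * x (i+1)) + (k-1) := by
    rw [Finset.sum_add_distrib, Finset.sum_const, smul_eq_mul, mul_one, Nat.card_Icc]
    congr 1
  have hx1 : 1 ≤ x 1 := hpos 1 (by simp only [Finset.mem_Icc]; omega)
  have hxk : 1 ≤ x k := hpos k (by simp only [Finset.mem_Icc]; omega)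
  have hkey2 := key (x k) (x 1) hxk hx1
  omega
end

section
/- Let p ≥ 2. A graph G is a [p+2, p]-graph if every induced subgraph of G on p+2 vertices has at least p edges. If G is a triangle-free [p+2, p]-graph of order n ≥ 2p+3 with minimum degree at least p, then G is p-regular. -/
/-! An `[s, t]`-graph with `t > 0` has independence number below `s`, and in a triangle-free
graph every neighbourhood is independent; so all degrees lie between `p` and `p + 1`.
If `deg v = p + 1`, the neighbourhood `N` of `v` is an independent `(p + 1)`-set. For `u ∉ N`
every edge of the `(p + 2)`-set `N ∪ {u}` passes through `u`, so `u` has at least `p` neighbours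
in `N`. As `2p > p + 1`, two such vertices have a common neighbour in `N`, hence are not
adjacent: `V \ N` is an independent set of size `n - p - 1 ≥ p + 2`, a contradiction. -/

open SimpleGraph

/-- A graph `G` is an `[s,t]`-graph if every induced subgraph of order `s` has at least
`t` edges. -/
def IsSTGraph {V : Type*} [Fintype V] [DecidableEq V] (G : SimpleGraph V) [DecidableRel G.Adj]
    (s t : ℕ) : Prop :=
  ∀ S : Finset V, S.card = s → t ≤ (G.induce (S : Set V)).edgeFinset.card

open Finset

namespace SimpleGraph

variable {V : Type*} {G : SimpleGraph V}

lemma IsIndepSet.induce_eq_bot {s : Set V} (h : G.IsIndepSet s) : G.induce s = ⊥ := by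
  ext a b
  exact ⟨fun hab ↦ h a.2 b.2 (Subtype.coe_ne_coe.2 hab.ne) hab, fun h ↦ h.elim⟩

section Finite

variable [Fintype V] [DecidableRel G.Adj]

lemma CliqueFree.isIndepSet_neighborFinset (h : G.CliqueFree 3) (v : V) :
    G.IsIndepSet (G.neighborFinset v) := by
  rw [coe_neighborFinset]
  exact isIndepSet_neighborSet_of_triangleFree G h v

lemma CliqueFree.degree_le_indepNum (h : G.CliqueFree 3) (v : V) : G.degree v ≤ G.indepNum := by
  rw [← card_neighborFinset_eq_degree]
  exact (h.isIndepSet_neighborFinset v).card_le_indepNum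

variable [DecidableEq V]

lemma card_edgeFinset_le_degree_of_forall_mem {u : V} (h : ∀ e ∈ G.edgeSet, u ∈ e) :
    #G.edgeFinset ≤ G.degree u := by
  rw [← card_incidenceFinset_eq_degree]
  exact card_le_card fun e he ↦
    (mem_incidenceFinset ..).2 ⟨mem_edgeFinset.1 he, h e (mem_edgeFinset.1 he)⟩

lemma degree_induce_finset (S : Finset V) (u : (S : Set V)) :
    (G.induce (S : Set V)).degree u = #(G.neighborFinset u ∩ S) := by
  have := congrArg Finset.card (map_neighborFinset_induce (G := G) (s := (S : Set V)) u)
  rw [card_map, Finset.toFinset_coe] at this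
  rw [← this]
  -- the two sides carry different `Fintype` instances on `↑↑S`
  convert (card_neighborFinset_eq_degree _ _).symm

lemma CliqueFree.not_adj_of_card_lt_card_add_card (h : G.CliqueFree 3) {N : Finset V} {a b : V}
    (hab : #N < #(G.neighborFinset a ∩ N) + #(G.neighborFinset b ∩ N)) : ¬G.Adj a b := by
  intro hadj
  obtain ⟨x, hx⟩ := inter_nonempty_of_card_lt_card_add_card inter_subset_right inter_subset_right hab
  simp only [mem_inter, mem_neighborFinset] at hx
  exact h {a, b, x} (is3Clique_triple_iff.2 ⟨hadj, hx.1.1, hx.2.1⟩)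

end Finite

end SimpleGraph

section STGraph

variable {V : Type*} [Fintype V] [DecidableEq V] {G : SimpleGraph V} [DecidableRel G.Adj]
  {s t : ℕ}

lemma IsSTGraph.indepNum_lt (hst : IsSTGraph G s t) (ht : 0 < t) : G.indepNum < s := by
  by_contra! h
  obtain ⟨A, hA⟩ := G.exists_isNIndepSet_indepNum
  obtain ⟨S, hSA, hS⟩ := exists_subset_card_eq (hA.card_eq ▸ h)
  have := hst S hS
  rw [edgeFinset_eq_empty.2 (IsIndepSet.induce_eq_bot
    (Set.Pairwise.mono (coe_subset.2 hSA) hA.isIndepSet)),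
    card_empty] at this
  omega

lemma IsSTGraph.le_card_neighborFinset_inter (hst : IsSTGraph G (s + 1) t) {N : Finset V}
    (hN : G.IsIndepSet N) (hNs : #N = s) {u : V} (hu : u ∉ N) :
    t ≤ #(G.neighborFinset u ∩ N) := by
  set S := insert u N
  have huS : u ∈ (S : Set V) := mem_insert_self u N
  have hcenter : ∀ e ∈ (G.induce (S : Set V)).edgeSet, ⟨u, huS⟩ ∈ e := by
    refine Sym2.ind fun a b hab ↦ ?_
    rw [mem_edgeSet] at hab
    by_contra! hu'
    simp only [Sym2.mem_iff, not_or] at hu'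
    have ha : (a : V) ∈ N := mem_of_mem_insert_of_ne a.2 fun h ↦ hu'.1 (Subtype.ext h.symm)
    have hb : (b : V) ∈ N := mem_of_mem_insert_of_ne b.2 fun h ↦ hu'.2 (Subtype.ext h.symm)
    exact hN ha hb (Subtype.coe_ne_coe.2 hab.ne) hab
  calc t ≤ #(G.induce (S : Set V)).edgeFinset := hst S (by rw [card_insert_of_notMem hu, hNs])
    _ ≤ (G.induce (S : Set V)).degree ⟨u, huS⟩ := card_edgeFinset_le_degree_of_forall_mem hcenter
    _ = #(G.neighborFinset u ∩ S) := degree_induce_finset S _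
    _ = #(G.neighborFinset u ∩ N) := by rw [inter_insert_of_notMem (by simp)]

end STGraph

/-- a triangle-free `[p+2, p]`-graph of order `n ≥ 2p+3` with minimum degree at
least `p ≥ 2` is `p`-regular. -/
theorem triangle_free_st_graph_regular {V : Type*} [Fintype V] [DecidableEq V]
    (G : SimpleGraph V) [DecidableRel G.Adj] (p n : ℕ) (hp : 2 ≤ p)
    (horder : Fintype.card V = n) (hn : 2 * p + 3 ≤ n)
    (hst : IsSTGraph G (p + 2) p) (htf : G.CliqueFree 3)
    (hdeg : p ≤ G.minDegree) :
    G.IsRegularOfDegree p := by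
  have hα : G.indepNum < p + 2 := hst.indepNum_lt (by omega)
  intro v
  by_contra hne
  set N := G.neighborFinset v
  have hN : #N = p + 1 := by
    have := htf.degree_le_indepNum v
    have := hdeg.trans (G.minDegree_le_degree v)
    rw [card_neighborFinset_eq_degree]
    omega
  have hNind : G.IsIndepSet N := htf.isIndepSet_neighborFinset v
  have hout : G.IsIndepSet ↑(univ \ N) := fun a ha b hb _ ↦ by
    have ha := hst.le_card_neighborFinset_inter hNind hN (mem_sdiff.1 ha).2
    have hb := hst.le_card_neighborFinset_inter hNind hN (mem_sdiff.1 hb).2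
    exact htf.not_adj_of_card_lt_card_add_card (N := N) (by omega)
  have := hout.card_le_indepNum
  rw [card_sdiff_of_subset (subset_univ N), card_univ, horder, hN] at this
  omega
end

section
/- Let q ≥ 3 be an integer and p = 2q. The q-blow-up of the 5-cycle C_5 is a [p+2, p]-graph, i.e., every induced subgraph on p+2 vertices has at least p edges. -/
open SimpleGraph

/-- The `k`-blow-up of a graph `H`: each vertex is replaced by `k` copies, a copy of `u` is
adjacent to a copy of `v` iff `u` and `v` are adjacent in `H`. -/
def blowup {α : Type*} (H : SimpleGraph α) (k : ℕ) : SimpleGraph (α × Fin k) where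
  Adj x y := H.Adj x.1 y.1
  symm := ⟨fun _ _ h => H.adj_symm h⟩
  loopless := ⟨fun x h => H.irrefl h⟩

instance {α : Type*} (H : SimpleGraph α) [DecidableRel H.Adj] (k : ℕ) :
    DecidableRel (blowup H k).Adj :=
  fun x y => inferInstanceAs (Decidable (H.Adj x.1 y.1))

open Finset

/-!
If `S` has `a u` vertices in the fiber over `u`, the induced subgraph has
`∑ u, a u * a (u + 1)` edges, with `a u ≤ q` and `∑ u, a u = 2q + 2`. If every `a u` is
positive, each term `a u * a (u + 1)` is at least `a u`, so there are at least `2q + 2` edges.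
If `a i = 0`, the four other fibers carry all `2q + 2` vertices and contain the two disjoint
edges `{i+1, i+2}` and `{i+3, i+4}` of `C₅`; since `(q - x) * (q - y) ≥ 0`, two fibers of total
size `s` span at least `q * (s - q)` edges, and the two pairs together give at least
`q * (2q + 2 - 2q) = 2q`.
-/

section Fiber

variable {α β : Type*} [DecidableEq α]

def fiberCard (S : Finset (α × β)) (u : α) : ℕ := #{x ∈ S | x.1 = u}

lemma fiberCard_le_card [Fintype β] (S : Finset (α × β)) (u : α) :
    fiberCard S u ≤ Fintype.card β :=
  calc fiberCard S u ≤ #({u} ×ˢ (univ : Finset β)) :=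
        card_le_card fun x hx => by
          simp only [mem_filter] at hx
          simp [Prod.ext_iff, hx.2]
    _ = Fintype.card β := by simp

lemma sum_fiberCard [Fintype α] (S : Finset (α × β)) : ∑ u, fiberCard S u = #S :=
  (card_eq_sum_card_fiberwise fun x _ => mem_univ x.1).symm

lemma sum_comp_fst_eq_sum_fiberCard_smul [Fintype α] {M : Type*} [AddCommMonoid M]
    (S : Finset (α × β)) (f : α → M) : ∑ x ∈ S, f x.1 = ∑ u, fiberCard S u • f u := by
  rw [← sum_fiberwise_of_maps_to fun x _ => mem_univ x.1]
  refine sum_congr rfl fun u _ => ?_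
  rw [sum_congr rfl fun x hx => by rw [(mem_filter.1 hx).2], sum_const, fiberCard]

end Fiber

lemma degree_induce_eq_card_filter_adj {V : Type*} [Fintype V] [DecidableEq V]
    (G : SimpleGraph V) [DecidableRel G.Adj] (S : Finset V) (v : (S : Set V)) :
    (G.induce (S : Set V)).degree v = #{w ∈ S | G.Adj v w} := by
  rw [← card_neighborFinset_eq_degree, ← card_map (Function.Embedding.subtype _)]
  congr 1
  ext w
  simp [and_comm]

@[simp]
lemma blowup_adj {α : Type*} (H : SimpleGraph α) {k : ℕ} {x y : α × Fin k} :
    (blowup H k).Adj x y ↔ H.Adj x.1 y.1 := Iff.rfl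

section Blowup

variable {α : Type*} [Fintype α] [DecidableEq α] (H : SimpleGraph α) [DecidableRel H.Adj]
  {k : ℕ}

lemma card_filter_blowup_adj (S : Finset (α × Fin k)) (x : α × Fin k) :
    #{y ∈ S | (blowup H k).Adj x y} = ∑ w ∈ H.neighborFinset x.1, fiberCard S w := by
  rw [card_eq_sum_card_fiberwise (f := Prod.fst) (t := H.neighborFinset x.1)
    fun y hy => by simpa using (mem_filter.1 hy).2]
  refine sum_congr rfl fun w hw => ?_
  rw [fiberCard, filter_filter]
  exact congrArg card <| filter_congr fun y _ =>
    and_iff_right_of_imp fun hy =>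
      (blowup_adj H).2 (hy ▸ (H.mem_neighborFinset _ _).1 hw)

lemma two_mul_card_edgeFinset_induce_blowup (S : Finset (α × Fin k)) :
    2 * #((blowup H k).induce (S : Set (α × Fin k))).edgeFinset
      = ∑ u, fiberCard S u * ∑ w ∈ H.neighborFinset u, fiberCard S w := by
  calc 2 * #((blowup H k).induce (S : Set (α × Fin k))).edgeFinset
      = ∑ x : (S : Set (α × Fin k)), ((blowup H k).induce (S : Set (α × Fin k))).degree x :=
        (sum_degrees_eq_twice_card_edges _).symm
    _ = ∑ x ∈ S, ∑ w ∈ H.neighborFinset x.1, fiberCard S w := by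
        simp only [degree_induce_eq_card_filter_adj, card_filter_blowup_adj]
        exact sum_coe_sort S fun x => ∑ w ∈ H.neighborFinset x.1, fiberCard S w
    _ = _ :=
        sum_comp_fst_eq_sum_fiberCard_smul S fun u => ∑ w ∈ H.neighborFinset u, fiberCard S w

end Blowup

lemma sum_mul_sum_neighborFinset_cycleGraph {M : Type*} [CommSemiring M] {n : ℕ}
    (a : Fin (n + 3) → M) :
    ∑ u, a u * ∑ w ∈ (cycleGraph (n + 3)).neighborFinset u, a w
      = 2 * ∑ u, a u * a (u + 1) := by
  have hne : ∀ u : Fin (n + 3), u - 1 ≠ u + 1 := fun u => by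
    simp only [ne_eq, sub_eq_iff_eq_add, add_assoc u, left_eq_add]
    rw [Fin.ext_iff, Fin.val_add, Fin.val_one, Fin.val_zero, Nat.mod_eq_of_lt (by omega)]
    omega
  have hshift : ∑ u, a u * a (u - 1) = ∑ u, a u * a (u + 1) := by
    rw [← Equiv.sum_comp (Equiv.addRight 1)]
    simp [mul_comm]
  simp only [cycleGraph_neighborFinset, sum_pair (hne _), mul_add, sum_add_distrib, hshift]
  ring

lemma sum_rotate_fin_five {M : Type*} [AddCommMonoid M] (f : Fin 5 → M) (i : Fin 5) :
    ∑ j, f j = f i + f (i + 1) + f (i + 2) + f (i + 3) + f (i + 4) := by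
  rw [← Equiv.sum_comp (Equiv.addLeft i), Fin.sum_univ_five]
  simp

lemma two_mul_le_sum_mul_succ_fin_five (q : ℕ) (a : Fin 5 → ℕ) (hle : ∀ i, a i ≤ q)
    (hsum : ∑ i, a i = 2 * q + 2) : 2 * q ≤ ∑ i, a i * a (i + 1) := by
  by_cases hzero : ∃ i, a i = 0
  · obtain ⟨i, hi⟩ := hzero
    rw [sum_rotate_fin_five _ i] at hsum ⊢
    simp only [add_assoc, Fin.reduceAdd, add_zero]
    have h12 := mul_add_mul_le_mul_add_mul (hle (i + 1)) (hle (i + 2))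
    have h34 := mul_add_mul_le_mul_add_mul (hle (i + 3)) (hle (i + 4))
    nlinarith
  · push Not at hzero
    calc 2 * q ≤ ∑ i, a i := by omega
      _ ≤ ∑ i, a i * a (i + 1) :=
        sum_le_sum fun i _ => Nat.le_mul_of_pos_right _ (Nat.pos_of_ne_zero (hzero _))

theorem blowup_C5_isSTGraph_general (q p : ℕ) (hp : p = 2 * q) :
    IsSTGraph (blowup (cycleGraph 5) q) (p + 2) p := by
  subst hp
  intro S hS
  have hcount := two_mul_card_edgeFinset_induce_blowup (cycleGraph 5) S
  rw [sum_mul_sum_neighborFinset_cycleGraph (n := 2)] at hcount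
  have hbound := two_mul_le_sum_mul_succ_fin_five q (fiberCard S)
    (fun u => (fiberCard_le_card S u).trans_eq (Fintype.card_fin q))
    (by rw [sum_fiberCard, hS])
  linarith

/-- for `q ≥ 3` and `p = 2q`, the `q`-blow-up of `C₅` is a `[p+2, p]`-graph. -/
theorem blowup_C5_isSTGraph (q p : ℕ) (hq : 3 ≤ q) (hp : p = 2 * q) :
    IsSTGraph (blowup (cycleGraph 5) q) (p + 2) p :=
  blowup_C5_isSTGraph_general q p hp
end

section
/- Every 2-connected [4,2]-graph of order at least 7 contains a triangle. -/
/-!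
Suppose `G` is triangle-free. The neighbourhood of a vertex is then independent, so the
`[4,2]` condition bounds every degree by 3. Let `v` be a vertex with a neighbour `a` (which exists
by connectivity) and four non-neighbours `w, x, y, z`. If `w ≁ y`, the `[4,2]` condition on
`{v, w, y, x}` and `{v, w, y, z}` makes `x` and `z` adjacent to both `w` and `y`, so `x ≁ z`; on
`{v, x, z, a}` and `{v, w, y, a}` it makes `a` adjacent to one of `x, z` and to one of `w, y`,
closing a triangle. Hence the four non-neighbours are pairwise adjacent, which is again
impossible. With at most 3 neighbours and at most 3 non-neighbours per vertex, `|V| ≥ 7` forces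
`G` to be a 3-regular graph on 7 vertices, which the handshake lemma rules out.
-/

open SimpleGraph

/-- A graph is `k`-connected if it has more than `k` vertices and removing any set of fewer
than `k` vertices leaves a connected graph. -/
def IsKConnected {V : Type*} [Fintype V] (G : SimpleGraph V) (k : ℕ) : Prop :=
  k < Fintype.card V ∧ ∀ S : Finset V, S.card < k → (G.induce ((↑S : Set V)ᶜ)).Connected

open Finset

section

variable {V : Type*} {G : SimpleGraph V}

lemma IsKConnected.connected [Fintype V] {k : ℕ} (h : IsKConnected G k) (hk : 0 < k) :
    G.Connected := by
  have hG := h.2 ∅ (by simpa using hk)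
  rw [coe_empty, Set.compl_empty] at hG
  exact (induceUnivIso G).connected_iff.mp hG

lemma card_edgeFinset_induce_le_one [Fintype V] [DecidableEq V] [DecidableRel G.Adj]
    {s : Finset V} {x y : V} (h : ∀ u ∈ s, ∀ v ∈ s, G.Adj u v → s(u, v) = s(x, y)) :
    #(G.induce (s : Set V)).edgeFinset ≤ 1 := by
  refine card_le_one.mpr fun e he f hf => Sym2.map.injective Subtype.val_injective ?_
  rw [mem_edgeFinset] at he hf
  induction e using Sym2.ind with | _ u v =>
  induction f using Sym2.ind with | _ p q =>
  simp only [Sym2.map_mk]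
  rw [h u u.2 v v.2 he, h p p.2 q q.2 hf]

lemma SimpleGraph.CliqueFree.not_adj_of_adj_of_adj [DecidableEq V] (h : G.CliqueFree 3)
    {x y z : V} (hxy : G.Adj x y) (hxz : G.Adj x z) : ¬G.Adj y z :=
  fun hyz => h _ (is3Clique_triple_iff.mpr ⟨hxy, hxz, hyz⟩)

namespace IsSTGraph

variable [Fintype V] [DecidableEq V] [DecidableRel G.Adj]

lemma adj_of_compl_adj (hst : IsSTGraph G 4 2) {a b c d : V}
    (hab : Gᶜ.Adj a b) (hac : Gᶜ.Adj a c) (had : Gᶜ.Adj a d) (hbc : Gᶜ.Adj b c)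
    (hbd : b ≠ d) (hcd : c ≠ d) : G.Adj b d := by
  by_contra nbd
  have hcard : #{a, b, c, d} = 4 :=
    card_eq_four.mpr ⟨a, b, c, d, hab.1, hac.1, had.1, hbc.1, hbd, hcd, rfl⟩
  have hle : #(G.induce (({a, b, c, d} : Finset V) : Set V)).edgeFinset ≤ 1 := by
    refine card_edgeFinset_induce_le_one (x := c) (y := d) ?_
    simp only [mem_insert, mem_singleton]
    rintro u (rfl | rfl | rfl | rfl) v (rfl | rfl | rfl | rfl) huv <;>
      first
      | exact absurd huv G.irrefl
      | exact absurd huv ‹_› | exact absurd huv.symm ‹_›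
      | exact absurd huv ‹Gᶜ.Adj _ _›.2 | exact absurd huv.symm ‹Gᶜ.Adj _ _›.2
      | rfl | exact Sym2.eq_swap
  have := hst _ hcard
  omega

lemma degree_le_three (hst : IsSTGraph G 4 2) (h3 : G.CliqueFree 3) (v : V) :
    G.degree v ≤ 3 := by
  by_contra! h
  obtain ⟨a, ha, b, hb, c, hc, d, hd, hab, hac, had, hbc, hbd, hcd⟩ := three_lt_card.mp h
  rw [mem_neighborFinset] at ha hb hc hd
  exact h3.not_adj_of_adj_of_adj hb hd <| hst.adj_of_compl_adj
    ⟨hab, h3.not_adj_of_adj_of_adj ha hb⟩ ⟨hac, h3.not_adj_of_adj_of_adj ha hc⟩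
    ⟨had, h3.not_adj_of_adj_of_adj ha hd⟩ ⟨hbc, h3.not_adj_of_adj_of_adj hb hc⟩ hbd hcd

lemma adj_or_adj_of_compl_adj (hst : IsSTGraph G 4 2) {v a x z : V} (hva : G.Adj v a)
    (hvx : Gᶜ.Adj v x) (hvz : Gᶜ.Adj v z) (hxz : Gᶜ.Adj x z) : G.Adj a x ∨ G.Adj a z := by
  by_contra! ⟨nax, naz⟩
  have hxa : x ≠ a := by rintro rfl; exact hvx.2 hva
  have hza : z ≠ a := by rintro rfl; exact hvz.2 hva
  exact naz (hst.adj_of_compl_adj hxz hvx.symm ⟨hxa, fun h => nax h.symm⟩ hvz.symm hza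
    hva.ne).symm

lemma adj_of_four_compl_adj (hst : IsSTGraph G 4 2) (h3 : G.CliqueFree 3)
    {v a w x y z : V} (hva : G.Adj v a)
    (hw : Gᶜ.Adj v w) (hx : Gᶜ.Adj v x) (hy : Gᶜ.Adj v y) (hz : Gᶜ.Adj v z)
    (hwx : w ≠ x) (hwy : w ≠ y) (hwz : w ≠ z) (hxy : x ≠ y) (hxz : x ≠ z) (hyz : y ≠ z) :
    G.Adj w y := by
  by_contra nwy
  have hwy' : Gᶜ.Adj w y := ⟨hwy, nwy⟩
  have awx := hst.adj_of_compl_adj hw hy hx hwy' hwx hxy.symm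
  have ayx := hst.adj_of_compl_adj hy hw hx hwy'.symm hxy.symm hwx
  have awz := hst.adj_of_compl_adj hw hy hz hwy' hwz hyz
  have ayz := hst.adj_of_compl_adj hy hw hz hwy'.symm hyz hwz
  have hxz' : Gᶜ.Adj x z := ⟨hxz, h3.not_adj_of_adj_of_adj awx awz⟩
  rcases hst.adj_or_adj_of_compl_adj hva hx hz hxz' with hax | haz <;>
    rcases hst.adj_or_adj_of_compl_adj hva hw hy hwy' with haw | hay
  · exact h3.not_adj_of_adj_of_adj haw hax awx
  · exact h3.not_adj_of_adj_of_adj hay hax ayx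
  · exact h3.not_adj_of_adj_of_adj haw haz awz
  · exact h3.not_adj_of_adj_of_adj hay haz ayz

lemma degree_compl_le_three (hst : IsSTGraph G 4 2) (h3 : G.CliqueFree 3) {v a : V}
    (hva : G.Adj v a) : Gᶜ.degree v ≤ 3 := by
  by_contra! h
  obtain ⟨w, hw, x, hx, y, hy, z, hz, hwx, hwy, hwz, hxy, hxz, hyz⟩ := three_lt_card.mp h
  rw [mem_neighborFinset] at hw hx hy hz
  exact h3.not_adj_of_adj_of_adj
    (hst.adj_of_four_compl_adj h3 hva hw hy hx hz hwy hwx hwz hxy.symm hyz hxz)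
    (hst.adj_of_four_compl_adj h3 hva hw hx hy hz hwx hwy hwz hxy hxz hyz)
    (hst.adj_of_four_compl_adj h3 hva hx hw hy hz hwx.symm hxy hxz hwy hwz hyz)

end IsSTGraph

end

/-- every 2-connected `[4,2]`-graph of order at least 7 contains a triangle. -/
theorem two_connected_42_graph_has_triangle {V : Type*} [Fintype V] [DecidableEq V]
    (G : SimpleGraph V) [DecidableRel G.Adj]
    (horder : 7 ≤ Fintype.card V) (hconn : IsKConnected G 2) (hst : IsSTGraph G 4 2) :
    ∃ t : Finset V, G.IsNClique 3 t := by
  by_contra hno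
  have h3 : G.CliqueFree 3 := fun t ht => hno ⟨t, ht⟩
  have : Nontrivial V := Fintype.one_lt_card_iff_nontrivial.mp (by omega)
  have hbounds (v : V) : G.degree v = 3 ∧ Fintype.card V = 7 := by
    obtain ⟨a, hva⟩ := (G.degree_pos_iff_exists_adj v).mp
      ((hconn.connected two_pos).preconnected.degree_pos_of_nontrivial v)
    have hdeg := hst.degree_le_three h3 v
    have hcompl := hst.degree_compl_le_three h3 hva
    rw [degree_compl] at hcompl
    omega
  obtain ⟨v⟩ := ‹Nontrivial V›.to_nonempty
  have hsum := G.sum_degrees_eq_twice_card_edges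
  simp only [fun v => (hbounds v).1, sum_const, card_univ, (hbounds v).2, smul_eq_mul] at hsum
  omega
end

section
/- There is no 2-regular [4,2]-graph of order at least 7. -/
open SimpleGraph

lemma edges_le_one' {V : Type*} [Fintype V] [DecidableEq V] (G : SimpleGraph V)
    [DecidableRel G.Adj] (S : Finset V) (u w : V)
    (h : ∀ x ∈ S, ∀ y ∈ S, G.Adj x y → s(x, y) = s(u, w)) :
    (G.induce (S : Set V)).edgeFinset.card ≤ 1 := by
  rw [Finset.card_le_one]
  intro e he f hf
  rw [mem_edgeFinset] at he hf
  have hvi : Function.Injective (fun x : ↥(S : Set V) => (x : V)) := Subtype.val_injective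
  have hinj := Sym2.map.injective hvi
  apply hinj
  revert he hf
  induction e using Sym2.ind with
  | _ p q =>
  induction f using Sym2.ind with
  | _ r s =>
  intro he hf
  rw [mem_edgeSet] at he hf
  have h1 : G.Adj p.1 q.1 := he
  have h2 : G.Adj r.1 s.1 := hf
  have e1 := h p.1 p.2 q.1 q.2 h1
  have e2 := h r.1 r.2 s.1 s.2 h2
  simp only [Sym2.map_pair_eq]
  rw [e1, e2]

lemma nbr_pair' {V : Type*} [Fintype V] [DecidableEq V] (G : SimpleGraph V)
    [DecidableRel G.Adj] (hreg : G.IsRegularOfDegree 2) {u w : V} (h : G.Adj u w) :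
    ∃ c, w ≠ c ∧ G.neighborFinset u = {w, c} := by
  have h2 : (G.neighborFinset u).card = 2 := hreg u
  obtain ⟨p, q, hpq, hset⟩ := Finset.card_eq_two.mp h2
  have hw : w ∈ G.neighborFinset u := (mem_neighborFinset G u w).mpr h
  rw [hset] at hw
  rcases Finset.mem_insert.mp hw with rfl | hw
  · exact ⟨q, hpq, hset⟩
  · rw [Finset.mem_singleton] at hw
    subst hw
    exact ⟨p, fun he => hpq he.symm, by rw [hset, Finset.pair_comm]⟩

/-- there is no 2-regular `[4,2]`-graph of order at least 7. -/
theorem no_two_regular_42_graph {V : Type*} [Fintype V] [DecidableEq V]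
    (G : SimpleGraph V) [DecidableRel G.Adj]
    (horder : 7 ≤ Fintype.card V) (hreg : G.IsRegularOfDegree 2) :
    ¬ IsSTGraph G 4 2 := by
  intro h
  have hpos : 0 < Fintype.card V := by omega
  obtain ⟨v⟩ := Fintype.card_pos_iff.mp hpos
  obtain ⟨a, b, hab, hv⟩ := Finset.card_eq_two.mp (hreg v)
  have hva : G.Adj v a := by
    rw [← mem_neighborFinset, hv]; simp
  have adj_v : ∀ q, G.Adj v q → q = a ∨ q = b := by
    intro q hq
    have : q ∈ G.neighborFinset v := (mem_neighborFinset G v q).mpr hq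
    rw [hv] at this; simpa using this
  obtain ⟨c, hvc, ha⟩ := nbr_pair' G hreg hva.symm
  have adj_a : ∀ q, G.Adj a q → q = v ∨ q = c := by
    intro q hq
    have : q ∈ G.neighborFinset a := (mem_neighborFinset G a q).mpr hq
    rw [ha] at this; simpa using this
  set B : Finset V := {v, a, b, c} with hB
  have hvB : v ∈ B := by simp [hB]
  have haB : a ∈ B := by simp [hB]
  have hbB : b ∈ B := by simp [hB]
  have hcB : c ∈ B := by simp [hB]
  have hBcard : B.card ≤ 4 := by
    apply le_trans (Finset.card_insert_le _ _)
    have := Finset.card_insert_le a ({b, c} : Finset V)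
    have := Finset.card_insert_le b ({c} : Finset V)
    simp only [Finset.card_singleton] at *
    omega
  have hcompl : 3 ≤ Bᶜ.card := by
    have := Finset.card_compl B (α := V)
    omega
  obtain ⟨T, hTs, hT3⟩ := Finset.exists_subset_card_eq hcompl
  obtain ⟨x, y, z, hxy, hxz, hyz, hTeq⟩ := Finset.card_eq_three.mp hT3
  have hx : x ∉ B := by
    have : x ∈ Bᶜ := hTs (by rw [hTeq]; simp)
    simpa using this
  have hy : y ∉ B := by
    have : y ∈ Bᶜ := hTs (by rw [hTeq]; simp)
    simpa using this
  have hz : z ∉ B := by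
    have : z ∈ Bᶜ := hTs (by rw [hTeq]; simp)
    simpa using this
  -- generic: a 4-set with only one adjacent pair among distinct elems gives contradiction
  -- key step to finish in a pair-nonadjacent case
  have key : ∀ p q : V, p ∉ B → q ∉ B → p ≠ q → ¬ G.Adj p q → False := by
    intro p q hpB hqB hpq hnadj
    have nvp : ¬ G.Adj v p := fun h' => by
      rcases adj_v p h' with rfl | rfl
      · exact hpB haB
      · exact hpB hbB
    have nvq : ¬ G.Adj v q := fun h' => by
      rcases adj_v q h' with rfl | rfl
      · exact hqB haB
      · exact hqB hbB
    have nap : ¬ G.Adj a p := fun h' => by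
      rcases adj_a p h' with rfl | rfl
      · exact hpB hvB
      · exact hpB hcB
    have naq : ¬ G.Adj a q := fun h' => by
      rcases adj_a q h' with rfl | rfl
      · exact hqB hvB
      · exact hqB hcB
    have hvp : v ≠ p := fun h' => hpB (h' ▸ hvB)
    have hvq : v ≠ q := fun h' => hqB (h' ▸ hvB)
    have hap : a ≠ p := fun h' => hpB (h' ▸ haB)
    have haq : a ≠ q := fun h' => hqB (h' ▸ haB)
    set S : Finset V := {v, a, p, q} with hS
    have hScard : S.card = 4 := by
      rw [hS]
      rw [Finset.card_insert_of_notMem (by simp [hva.ne, hvp, hvq]),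
        Finset.card_insert_of_notMem (by simp [hap, haq]),
        Finset.card_insert_of_notMem (by simp [hpq]),
        Finset.card_singleton]
    have hle := edges_le_one' G S v a ?_
    · have := h S hScard
      omega
    · intro x1 hx1 y1 hy1 hadj
      simp only [hS, Finset.mem_insert, Finset.mem_singleton] at hx1 hy1
      rcases hx1 with rfl | rfl | rfl | rfl <;> rcases hy1 with rfl | rfl | rfl | rfl <;>
        first
        | rfl
        | exact Sym2.eq_swap
        | exact absurd hadj (G.irrefl)
        | exact absurd hadj nvp
        | exact absurd hadj nvq
        | exact absurd hadj nap
        | exact absurd hadj naq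
        | exact absurd hadj hnadj
        | exact absurd hadj.symm nvp
        | exact absurd hadj.symm nvq
        | exact absurd hadj.symm nap
        | exact absurd hadj.symm naq
        | exact absurd hadj.symm hnadj
  by_cases h1 : G.Adj x y
  on_goal 2 => exact key x y hx hy hxy h1
  by_cases h2 : G.Adj x z
  on_goal 2 => exact key x z hx hz hxz h2
  by_cases h3 : G.Adj y z
  on_goal 2 => exact key y z hy hz hyz h3
  -- triangle case
  have nbrx : G.neighborFinset x = {y, z} := by
    refine (Finset.eq_of_subset_of_card_le ?_ ?_).symm
    · intro t ht
      rcases Finset.mem_insert.mp ht with rfl | ht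
      · exact (mem_neighborFinset G x t).mpr h1
      · rw [Finset.mem_singleton] at ht; subst ht
        exact (mem_neighborFinset G x t).mpr h2
    · have hdx : (G.neighborFinset x).card = 2 := hreg x
      rw [hdx, Finset.card_insert_of_notMem (by simp [hyz]), Finset.card_singleton]
  have nbry : G.neighborFinset y = {x, z} := by
    refine (Finset.eq_of_subset_of_card_le ?_ ?_).symm
    · intro t ht
      rcases Finset.mem_insert.mp ht with rfl | ht
      · exact (mem_neighborFinset G y t).mpr h1.symm
      · rw [Finset.mem_singleton] at ht; subst ht
        exact (mem_neighborFinset G y t).mpr h3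
    · have hdy : (G.neighborFinset y).card = 2 := hreg y
      rw [hdy, Finset.card_insert_of_notMem (by simp [hxz]), Finset.card_singleton]
  have adj_x : ∀ q, G.Adj x q → q = y ∨ q = z := by
    intro q hq
    have : q ∈ G.neighborFinset x := (mem_neighborFinset G x q).mpr hq
    rw [nbrx] at this; simpa using this
  have adj_y : ∀ q, G.Adj y q → q = x ∨ q = z := by
    intro q hq
    have : q ∈ G.neighborFinset y := (mem_neighborFinset G y q).mpr hq
    rw [nbry] at this; simpa using this
  -- find w outside {x,y,z,v,a,b}
  have hW : ∃ w, w ∉ ({x, y, z, v, a, b} : Finset V) := by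
    have hcard6 : ({x, y, z, v, a, b} : Finset V).card ≤ 6 := by
      apply le_trans (Finset.card_insert_le _ _)
      have h5 := Finset.card_insert_le y ({z, v, a, b} : Finset V)
      have h4 := Finset.card_insert_le z ({v, a, b} : Finset V)
      have h3' := Finset.card_insert_le v ({a, b} : Finset V)
      have h2' := Finset.card_insert_le a ({b} : Finset V)
      simp only [Finset.card_singleton] at *
      omega
    have : 0 < ({x, y, z, v, a, b} : Finset V)ᶜ.card := by
      have := Finset.card_compl ({x, y, z, v, a, b} : Finset V) (α := V)
      omega
    obtain ⟨w, hw⟩ := Finset.card_pos.mp this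
    exact ⟨w, Finset.mem_compl.mp hw⟩
  obtain ⟨w, hw⟩ := hW
  simp only [Finset.mem_insert, Finset.mem_singleton, not_or] at hw
  obtain ⟨hwx, hwy, hwz, hwv, hwa, hwb⟩ := hw
  have hvx : v ≠ x := fun h' => hx (h' ▸ hvB)
  have hvy : v ≠ y := fun h' => hy (h' ▸ hvB)
  have nvx : ¬ G.Adj v x := fun h' => by
    rcases adj_v x h' with rfl | rfl
    · exact hx haB
    · exact hx hbB
  have nvy : ¬ G.Adj v y := fun h' => by
    rcases adj_v y h' with rfl | rfl
    · exact hy haB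
    · exact hy hbB
  have nvw : ¬ G.Adj v w := fun h' => by
    rcases adj_v w h' with rfl | rfl
    · exact hwa rfl
    · exact hwb rfl
  have nxw : ¬ G.Adj x w := fun h' => by
    rcases adj_x w h' with rfl | rfl
    · exact hwy rfl
    · exact hwz rfl
  have nyw : ¬ G.Adj y w := fun h' => by
    rcases adj_y w h' with rfl | rfl
    · exact hwx rfl
    · exact hwz rfl
  have hvw : v ≠ w := fun h' => hwv h'.symm
  have hxw : x ≠ w := fun h' => hwx h'.symm
  have hyw : y ≠ w := fun h' => hwy h'.symm
  set S : Finset V := {v, x, y, w} with hS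
  have hScard : S.card = 4 := by
    rw [hS]
    rw [Finset.card_insert_of_notMem (by simp [hvx, hvy, hvw]),
      Finset.card_insert_of_notMem (by simp [hxy, hxw]),
      Finset.card_insert_of_notMem (by simp [hyw]),
      Finset.card_singleton]
  have hle := edges_le_one' G S x y ?_
  · have := h S hScard
    omega
  · intro x1 hx1 y1 hy1 hadj
    simp only [hS, Finset.mem_insert, Finset.mem_singleton] at hx1 hy1
    rcases hx1 with rfl | rfl | rfl | rfl <;> rcases hy1 with rfl | rfl | rfl | rfl <;>
      first
      | rfl
      | exact Sym2.eq_swap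
      | exact absurd hadj (G.irrefl)
      | exact absurd hadj nvx
      | exact absurd hadj nvy
      | exact absurd hadj nvw
      | exact absurd hadj nxw
      | exact absurd hadj nyw
      | exact absurd hadj.symm nvx
      | exact absurd hadj.symm nvy
      | exact absurd hadj.symm nvw
      | exact absurd hadj.symm nxw
      | exact absurd hadj.symm nyw
end

section
/- For n ≥ 7, let Z_n be the graph obtained from K_{n-3} minus an edge xy, together with a disjoint triangle uvw, by adding the edges xu and yv. Then Z_n is a 2-connected [4,2]-graph with connectivity 2 and independence number 3; in particular κ(Z_n) < α(Z_n). -/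
open SimpleGraph

/-- The graph `Z n` on `Fin n` (for `n ≥ 7`): vertices `0, …, n-4` induce `K_{n-3}` minus the
edge `xy` where `x = 0`, `y = 1`; vertices `u = n-3`, `v = n-2`, `w = n-1` form a triangle;
and the edges `xu` and `yv` are added. -/
def Zgraph (n : ℕ) : SimpleGraph (Fin n) where
  Adj i j := i ≠ j ∧
    (((i : ℕ) < n - 3 ∧ (j : ℕ) < n - 3 ∧ ¬((i : ℕ) = 0 ∧ (j : ℕ) = 1) ∧
        ¬((i : ℕ) = 1 ∧ (j : ℕ) = 0)) ∨
      (n - 3 ≤ (i : ℕ) ∧ n - 3 ≤ (j : ℕ)) ∨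
      ((i : ℕ) = 0 ∧ (j : ℕ) = n - 3) ∨ ((j : ℕ) = 0 ∧ (i : ℕ) = n - 3) ∨
      ((i : ℕ) = 1 ∧ (j : ℕ) = n - 2) ∨ ((j : ℕ) = 1 ∧ (i : ℕ) = n - 2))
  symm := by
    constructor
    intro i j ⟨hne, h⟩
    exact ⟨hne.symm, by tauto⟩
  loopless := by
    constructor
    intro i ⟨hne, _⟩
    exact hne rfl

instance (n : ℕ) : DecidableRel (Zgraph n).Adj :=
  fun i j => inferInstanceAs (Decidable (_ ∧ _))

/-!
Split the vertices into the low part `K_{n-3} - xy` (values `< n - 3`, with `x = 0`, `y = 1`)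
and the triangle `uvw`. Among any three low vertices one lies outside `{x, y}` and is adjacent
to the other two, while the triangle is a clique: hence `α ≤ 3`, attained by `{x, y, w}`, and
every 4-set spans two edges (for two low and two high vertices, a missing low edge is `xy`, and
then `xu` or `yv` is present). Deleting one vertex keeps a low vertex outside `{x, y}`, adjacent
to all remaining low vertices, and one of the disjoint edges `xu`, `yv`, so the rest stays
connected; deleting `u` and `v` isolates `w`.
-/

open SimpleGraph Finset

namespace SimpleGraph

variable {V : Type*} {G : SimpleGraph V}

lemma reachable_induce_of_ne_imp_adj {s : Set V} {a b : s} (h : (a : V) ≠ b → G.Adj a b) :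
    (G.induce s).Reachable a b := by
  by_cases hab : a = b
  · exact hab ▸ Reachable.refl _
  · exact Adj.reachable (h (Subtype.coe_ne_coe.mpr hab))

theorem not_isKConnected_of_neighborFinset_subset [Fintype V] [DecidableRel G.Adj] {k : ℕ}
    {S : Finset V} (hS : #S < k) {w b : V} (hw : w ∉ S) (hb : b ∉ S) (hwb : w ≠ b)
    (hN : G.neighborFinset w ⊆ S) : ¬ IsKConnected G k := by
  rintro ⟨-, hconn⟩
  have : Nontrivial ((S : Set V)ᶜ : Set V) :=
    nontrivial_of_ne ⟨w, hw⟩ ⟨b, hb⟩ (Subtype.coe_ne_coe.mp hwb)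
  obtain ⟨c, hc⟩ := (hconn S hS).preconnected.exists_adj_of_nontrivial ⟨w, hw⟩
  exact c.2 (hN ((mem_neighborFinset _ _ _).mpr hc))

variable [DecidableRel G.Adj] {S : Finset V}

lemma two_le_card_edgeFinset_induce {a b c d : V} (ha : a ∈ S) (hb : b ∈ S) (hc : c ∈ S)
    (hd : d ∈ S) (hab : G.Adj a b) (hcd : G.Adj c d) (hne : s(a, b) ≠ s(c, d)) :
    2 ≤ #(G.induce (S : Set V)).edgeFinset := by
  refine one_lt_card.mpr ⟨s(⟨a, ha⟩, ⟨b, hb⟩), by simpa using hab, s(⟨c, hc⟩, ⟨d, hd⟩),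
    by simpa using hcd, fun h => hne ?_⟩
  simpa using congrArg (Sym2.map Subtype.val) h

lemma two_le_card_edgeFinset_induce_of_adj_adj {a b c : V} (ha : a ∈ S) (hb : b ∈ S)
    (hc : c ∈ S) (hab : a ≠ b) (hca : G.Adj c a) (hcb : G.Adj c b) :
    2 ≤ #(G.induce (S : Set V)).edgeFinset :=
  two_le_card_edgeFinset_induce hc ha hc hb hca hcb (by simp [hab, hcb.ne])

lemma two_le_card_edgeFinset_induce_of_forall_adj [DecidableEq V] {T : Finset V} (hTS : T ⊆ S)
    (hT : 2 < #T) {c : V} (hc : c ∈ T) (hadj : ∀ a ∈ T, a ≠ c → G.Adj c a) :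
    2 ≤ #(G.induce (S : Set V)).edgeFinset := by
  have : 1 < #(T.erase c) := by rw [card_erase_of_mem hc]; omega
  obtain ⟨a, ha, b, hb, hab⟩ := one_lt_card.mp this
  rw [mem_erase] at ha hb
  exact two_le_card_edgeFinset_induce_of_adj_adj (hTS ha.2) (hTS hb.2) (hTS hc) hab
    (hadj a ha.2 ha.1) (hadj b hb.2 hb.1)

end SimpleGraph

namespace Zgraph

variable {n : ℕ}

lemma adj_of_two_le {i j : Fin n} (hi : (i : ℕ) < n - 3) (hj : (j : ℕ) < n - 3)
    (hi2 : 2 ≤ (i : ℕ)) (hij : i ≠ j) : (Zgraph n).Adj i j :=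
  ⟨hij, Or.inl ⟨hi, hj, by omega, by omega⟩⟩

lemma adj_of_le_of_le {i j : Fin n} (hi : n - 3 ≤ (i : ℕ)) (hj : n - 3 ≤ (j : ℕ)) (hij : i ≠ j) :
    (Zgraph n).Adj i j :=
  ⟨hij, Or.inr (Or.inl ⟨hi, hj⟩)⟩

lemma adj_cross (hn : 3 < n) {i j : Fin n}
    (h : ((i : ℕ) = 0 ∧ (j : ℕ) = n - 3) ∨ ((i : ℕ) = 1 ∧ (j : ℕ) = n - 2)) :
    (Zgraph n).Adj i j :=
  ⟨by omega, by omega⟩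

lemma neighborFinset_last_subset (hn : 3 ≤ n) :
    (Zgraph n).neighborFinset ⟨n - 1, by omega⟩ ⊆ {⟨n - 3, by omega⟩, ⟨n - 2, by omega⟩} := by
  intro j hj
  obtain ⟨hne, h⟩ := (mem_neighborFinset _ _ _).mp hj
  simp only [ne_eq, Fin.ext_iff] at hne h
  simp only [mem_insert, mem_singleton, Fin.ext_iff]
  omega

lemma exists_forall_adj_of_two_lt_card {L : Finset (Fin n)} (hL : ∀ v ∈ L, (v : ℕ) < n - 3)
    (h : 2 < #L) : ∃ c ∈ L, ∀ a ∈ L, a ≠ c → (Zgraph n).Adj c a := by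
  obtain ⟨c, hc, hc2⟩ : ∃ c ∈ L, 2 ≤ (c : ℕ) := by
    by_contra! hlt
    have := card_le_card_of_injOn (t := range 2) Fin.val (fun v hv => mem_range.mpr (hlt v hv))
      Fin.val_injective.injOn
    simp only [card_range] at this
    omega
  exact ⟨c, hc, fun a ha hac => adj_of_two_le (hL c hc) (hL a ha) hc2 hac.symm⟩

lemma card_le_three_of_le {H : Finset (Fin n)} (hH : ∀ v ∈ H, n - 3 ≤ (v : ℕ)) : #H ≤ 3 := by
  have := card_le_card_of_injOn (t := Ico (n - 3) n) Fin.val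
    (fun v hv => mem_Ico.mpr ⟨hH v hv, v.isLt⟩) Fin.val_injective.injOn
  simp only [Nat.card_Ico] at this
  omega

lemma two_le_card_edgeFinset_induce_of_two_low_two_high (hn : 3 < n) {S : Finset (Fin n)}
    {a b p q : Fin n} (ha : a ∈ S) (hb : b ∈ S) (hp : p ∈ S) (hq : q ∈ S) (hab : a ≠ b)
    (hpq : p ≠ q) (ha' : (a : ℕ) < n - 3) (hb' : (b : ℕ) < n - 3) (hp' : n - 3 ≤ (p : ℕ))
    (hq' : n - 3 ≤ (q : ℕ)) : 2 ≤ #((Zgraph n).induce (S : Set (Fin n))).edgeFinset := by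
  have hpq_adj : (Zgraph n).Adj p q := adj_of_le_of_le hp' hq' hpq
  by_cases hab2 : 2 ≤ (a : ℕ) ∨ 2 ≤ (b : ℕ)
  · have hab_adj : (Zgraph n).Adj a b := ⟨hab, Or.inl ⟨ha', hb', by omega, by omega⟩⟩
    exact two_le_card_edgeFinset_induce ha hb hp hq hab_adj hpq_adj
      (by simp only [ne_eq, Sym2.eq_iff]; omega)
  wlog hpw : (p : ℕ) ≠ n - 1 generalizing p q
  · exact this hq hp hpq.symm hq' hp' hpq_adj.symm (by omega)
  wlog ha0 : (a : ℕ) = 0 generalizing a b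
  · exact this hb ha hab.symm hb' ha' (by omega) (by omega)
  -- here `a = x`, `b = y`, and `p ∈ {u, v}` is joined to one of them
  rcases (by omega : (p : ℕ) = n - 3 ∨ (p : ℕ) = n - 2) with hpu | hpv
  · exact two_le_card_edgeFinset_induce_of_adj_adj ha hq hp (by omega)
      (adj_cross hn (by omega)).symm hpq_adj
  · exact two_le_card_edgeFinset_induce_of_adj_adj hb hq hp (by omega)
      (adj_cross hn (by omega)).symm hpq_adj

lemma isSTGraph_four_two (hn : 3 < n) : IsSTGraph (Zgraph n) 4 2 := by
  intro S hS
  set L := S.filter fun v : Fin n => (v : ℕ) < n - 3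
  set H := S.filter fun v : Fin n => ¬(v : ℕ) < n - 3
  have hLH : #L + #H = 4 := hS ▸ card_filter_add_card_filter_not _
  have hLS : L ⊆ S := filter_subset _ _
  have hHS : H ⊆ S := filter_subset _ _
  have hL : ∀ v ∈ L, v ∈ S ∧ (v : ℕ) < n - 3 := fun v => mem_filter.mp
  have hH : ∀ v ∈ H, v ∈ S ∧ n - 3 ≤ (v : ℕ) := fun v hv => by
    obtain ⟨hvS, hv⟩ := mem_filter.mp hv; exact ⟨hvS, by omega⟩
  have hH3 : #H ≤ 3 := card_le_three_of_le fun v hv => (hH v hv).2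
  rcases (by omega : 2 < #L ∨ #H = 3 ∨ (#L = 2 ∧ #H = 2)) with hL3 | hH_eq | ⟨hL2, hH2⟩
  · obtain ⟨c, hc, hadj⟩ := exists_forall_adj_of_two_lt_card (fun v hv => (hL v hv).2) hL3
    exact two_le_card_edgeFinset_induce_of_forall_adj hLS hL3 hc hadj
  · obtain ⟨c, hc⟩ := card_pos.mp (by omega : 0 < #H)
    exact two_le_card_edgeFinset_induce_of_forall_adj hHS (by omega) hc
      fun a ha hac => adj_of_le_of_le (hH c hc).2 (hH a ha).2 hac.symm
  · obtain ⟨a, b, hab, hLab⟩ := card_eq_two.mp hL2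
    obtain ⟨p, q, hpq, hHpq⟩ := card_eq_two.mp hH2
    obtain ⟨haS, ha⟩ := hL a (by simp [hLab])
    obtain ⟨hbS, hb⟩ := hL b (by simp [hLab])
    obtain ⟨hpS, hp⟩ := hH p (by simp [hHpq])
    obtain ⟨hqS, hq⟩ := hH q (by simp [hHpq])
    exact two_le_card_edgeFinset_induce_of_two_low_two_high hn haS hbS hpS hqS hab hpq ha hb hp hq

lemma card_le_three_of_isIndepSet {S : Finset (Fin n)} (hS : (Zgraph n).IsIndepSet S) :
    #S ≤ 3 := by
  have hL : #(S.filter fun v : Fin n => (v : ℕ) < n - 3) ≤ 2 := by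
    by_contra! h
    obtain ⟨c, hc, hadj⟩ := exists_forall_adj_of_two_lt_card (fun v hv => (mem_filter.mp hv).2) h
    obtain ⟨a, ha, hac⟩ := exists_mem_ne h.le c
    exact hS (mem_filter.mp hc).1 (mem_filter.mp ha).1 hac.symm (hadj a ha hac)
  have hH : #(S.filter fun v : Fin n => ¬(v : ℕ) < n - 3) ≤ 1 := by
    refine card_le_one.mpr fun a ha b hb => by_contra fun hab => ?_
    obtain ⟨haS, ha⟩ := mem_filter.mp ha
    obtain ⟨hbS, hb⟩ := mem_filter.mp hb
    exact hS haS hbS hab (adj_of_le_of_le (by omega) (by omega) hab)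
  have := card_filter_add_card_filter_not (s := S) fun v : Fin n => (v : ℕ) < n - 3
  omega

lemma exists_isIndepSet_card_eq_three (hn : 5 ≤ n) :
    ∃ S : Finset (Fin n), (Zgraph n).IsIndepSet S ∧ #S = 3 := by
  refine ⟨{⟨0, by omega⟩, ⟨1, by omega⟩, ⟨n - 1, by omega⟩}, ?_, ?_⟩
  · rintro a ha b hb hab ⟨-, h⟩
    simp only [coe_insert, coe_singleton, Set.mem_insert_iff, Set.mem_singleton_iff,
      Fin.ext_iff] at ha hb
    simp only [ne_eq, Fin.ext_iff] at hab
    omega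
  · rw [card_eq_three]
    exact ⟨_, _, _, by simp [Fin.ext_iff], by simp [Fin.ext_iff]; omega,
      by simp [Fin.ext_iff]; omega, rfl⟩

lemma connected_induce_compl (hn : 7 ≤ n) {S : Finset (Fin n)} (hS : #S ≤ 1) :
    ((Zgraph n).induce ((S : Set (Fin n))ᶜ)).Connected := by
  have : Nonempty (Fin n) := ⟨⟨0, by omega⟩⟩
  obtain ⟨s, hs⟩ := card_le_one_iff_subset_singleton.mp hS
  have notMem : ∀ v : Fin n, (v : ℕ) ≠ s → v ∉ S := fun v hv h =>
    hv (by rw [mem_singleton.mp (hs h)])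
  obtain ⟨c, hcS, hc2, hc⟩ : ∃ c : Fin n, c ∉ S ∧ 2 ≤ (c : ℕ) ∧ (c : ℕ) < n - 3 := by
    by_cases hs2 : (s : ℕ) = 2
    · exact ⟨⟨3, by omega⟩, notMem _ (by simp; omega), by simp, by simp; omega⟩
    · exact ⟨⟨2, by omega⟩, notMem _ (by simp; omega), le_rfl, by simp; omega⟩
  -- one of the disjoint edges `xu`, `yv` survives
  obtain ⟨l, h, hlS, hhS, hl, hh, hlh⟩ : ∃ l h : Fin n, l ∉ S ∧ h ∉ S ∧ (l : ℕ) < n - 3 ∧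
      n - 3 ≤ (h : ℕ) ∧ (Zgraph n).Adj l h := by
    by_cases hsx : (s : ℕ) = 0 ∨ (s : ℕ) = n - 3
    · exact ⟨⟨1, by omega⟩, ⟨n - 2, by omega⟩, notMem _ (by simp; omega),
        notMem _ (by simp; omega), by simp; omega, by simp; omega, adj_cross (by omega) (by simp)⟩
    · exact ⟨⟨0, by omega⟩, ⟨n - 3, by omega⟩, notMem _ (by simp; omega),
        notMem _ (by simp; omega), by simp; omega, by simp, adj_cross (by omega) (by simp)⟩
  have reach_c (t : ((S : Set (Fin n))ᶜ : Set (Fin n))) (ht : ((t : Fin n) : ℕ) < n - 3) :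
      ((Zgraph n).induce _).Reachable ⟨c, hcS⟩ t :=
    reachable_induce_of_ne_imp_adj fun hne => adj_of_two_le hc ht hc2 hne
  refine (connected_iff_exists_forall_reachable _).2 ⟨⟨c, hcS⟩, fun t => ?_⟩
  by_cases ht : ((t : Fin n) : ℕ) < n - 3
  · exact reach_c t ht
  · exact (reach_c ⟨l, hlS⟩ hl).trans <| (Adj.reachable (v := ⟨h, hhS⟩) hlh).trans <|
      reachable_induce_of_ne_imp_adj fun hne => adj_of_le_of_le hh (by omega) hne

lemma isKConnected_two (hn : 7 ≤ n) : IsKConnected (Zgraph n) 2 :=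
  ⟨by simp only [Fintype.card_fin]; omega,
    fun _ hS => connected_induce_compl hn (Nat.le_of_lt_succ hS)⟩

lemma not_isKConnected_three (hn : 3 < n) : ¬ IsKConnected (Zgraph n) 3 :=
  not_isKConnected_of_neighborFinset_subset (card_le_two.trans_lt (by norm_num))
    (w := ⟨n - 1, by omega⟩) (b := ⟨0, by omega⟩) (by simp [Fin.ext_iff]; omega)
    (by simp [Fin.ext_iff]; omega) (by simp [Fin.ext_iff]; omega)
    (neighborFinset_last_subset (by omega))

end Zgraph

/-- for `n ≥ 7`, the graph `Z n` is a 2-connected `[4,2]`-graph with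
connectivity exactly 2 and independence number exactly 3; in particular `κ(Z n) < α(Z n)`. -/
theorem Zgraph_properties (n : ℕ) (hn : 7 ≤ n) :
    IsKConnected (Zgraph n) 2 ∧ IsSTGraph (Zgraph n) 4 2 ∧
      ¬ IsKConnected (Zgraph n) 3 ∧
      (∃ S : Finset (Fin n), (∀ a ∈ S, ∀ b ∈ S, a ≠ b → ¬ (Zgraph n).Adj a b) ∧ S.card = 3) ∧
      (∀ S : Finset (Fin n), (∀ a ∈ S, ∀ b ∈ S, a ≠ b → ¬ (Zgraph n).Adj a b) → S.card ≤ 3) := by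
  obtain ⟨S, hS, hS3⟩ := Zgraph.exists_isIndepSet_card_eq_three (by omega : 5 ≤ n)
  exact ⟨Zgraph.isKConnected_two hn, Zgraph.isSTGraph_four_two (by omega),
    Zgraph.not_isKConnected_three (by omega), ⟨S, fun a ha b hb => hS ha hb, hS3⟩,
    fun S hS => Zgraph.card_le_three_of_isIndepSet fun a ha b hb => hS a ha b hb⟩
end
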